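/- arXiv:1107.1028 — 2 statements merged into one kernel-verified Lean document; each statement's English description precedes it below -/
import Mathlib

section
/- There exists a constant C such that the following holds. Let v, w : ℝ² → ℝ² be continuously differentiable vector fields with compact support contained in Ω₊ = {(x,y) : y > 1}, and let ū : Ω₊ → ℝ² be a continuously differentiable vector field with N₂ := (∫_{Ω₊} y²|∇ū(x,y)|² dx dy)^{1/2} < ∞ and N_∞ := sup_{(x,y)∈Ω₊} y²·|∇ū(x,y)| < ∞. Then |∫_{Ω₊} [((v+e₁)·∇)ū]·w dx dy| ≤ C (1 + ‖∇v‖_{L²(Ω₊)}) (∫_{Ω₊} |w(x,y)|²/y² dx dy)^{1/2} (N₂ + N_∞). -/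
open MeasureTheory

noncomputable section

/-- Squared Euclidean norm of a vector in `ℝ²`. -/
def nsq (v : ℝ × ℝ) : ℝ := v.1 ^ 2 + v.2 ^ 2

/-- Euclidean dot product on `ℝ²`. -/
def dot2 (a b : ℝ × ℝ) : ℝ := a.1 * b.1 + a.2 * b.2

/-- Squared Frobenius norm of the Jacobian matrix `∇v` of a vector field `v` at `p`. -/
def jacsq (v : ℝ × ℝ → ℝ × ℝ) (p : ℝ × ℝ) : ℝ :=
  nsq (fderiv ℝ v p (1, 0)) + nsq (fderiv ℝ v p (0, 1))

/-- The half-plane `Ω₊ = {(x,y) : y > 1}`. -/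
def OmegaPlus : Set (ℝ × ℝ) := {p | 1 < p.2}

/-!
Pointwise, `|[((v+e₁)·∇)ū]·w| ≤ |∇ū| (|v| + 1) |w| = (y|∇ū|)(|w|/y) + (y²|∇ū|)(|v|/y)(|w|/y)`,
so Cauchy–Schwarz bounds the integral by `N₂ ‖w/y‖ + N_∞ ‖v/y‖ ‖w/y‖`. On each vertical line,
the Hardy inequality `∫_a^∞ f²/t² ≤ 4 ∫_a^∞ f'²` for `f(a) = 0` (integrate
`(f²/t)' = 2ff'/t - f²/t²` and apply Cauchy–Schwarz once more) gives `‖v/y‖ ≤ 2‖∂_y v‖ ≤ 2‖∇v‖`,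
hence the claim with `C = 2`.
-/

open Set Filter Topology

theorem nsq_nonneg (a : ℝ × ℝ) : 0 ≤ nsq a := by
  unfold nsq; positivity

theorem jacsq_nonneg (f : ℝ × ℝ → ℝ × ℝ) (p : ℝ × ℝ) : 0 ≤ jacsq f p :=
  add_nonneg (nsq_nonneg _) (nsq_nonneg _)

theorem continuous_nsq : Continuous nsq := by
  unfold nsq; fun_prop

theorem measurable_jacsq (f : ℝ × ℝ → ℝ × ℝ) : Measurable (jacsq f) :=
  (continuous_nsq.measurable.comp (measurable_fderiv_apply_const ℝ f _)).add
    (continuous_nsq.measurable.comp (measurable_fderiv_apply_const ℝ f _))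

theorem abs_dot2_le (a b : ℝ × ℝ) : |dot2 a b| ≤ √(nsq a) * √(nsq b) := by
  rw [← Real.sqrt_mul (nsq_nonneg a)]
  apply Real.abs_le_sqrt
  simp only [nsq, dot2]
  nlinarith [sq_nonneg (a.1 * b.2 - a.2 * b.1)]

theorem sqrt_nsq_add_le (a b : ℝ × ℝ) : √(nsq (a + b)) ≤ √(nsq a) + √(nsq b) := by
  have hab : nsq (a + b) = nsq a + 2 * dot2 a b + nsq b := by
    simp only [nsq, dot2, Prod.fst_add, Prod.snd_add]; ring
  refine Real.sqrt_le_iff.mpr ⟨by positivity, ?_⟩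
  rw [hab, add_sq, Real.sq_sqrt (nsq_nonneg a), Real.sq_sqrt (nsq_nonneg b)]
  nlinarith [(le_abs_self _).trans (abs_dot2_le a b)]

theorem nsq_fderiv_apply_le (f : ℝ × ℝ → ℝ × ℝ) (p u : ℝ × ℝ) :
    nsq (fderiv ℝ f p u) ≤ jacsq f p * nsq u := by
  have hu : fderiv ℝ f p u = u.1 • fderiv ℝ f p (1, 0) + u.2 • fderiv ℝ f p (0, 1) := by
    rw [← map_smul, ← map_smul, ← map_add]; simp
  rw [hu]
  set A := fderiv ℝ f p (1, 0)
  set B := fderiv ℝ f p (0, 1)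
  simp only [jacsq, nsq, Prod.fst_add, Prod.snd_add, Prod.smul_fst, Prod.smul_snd, smul_eq_mul]
  nlinarith [sq_nonneg (u.1 * B.1 - u.2 * A.1), sq_nonneg (u.1 * B.2 - u.2 * A.2)]

theorem abs_dot2_fderiv_apply_le (f : ℝ × ℝ → ℝ × ℝ) (p u b : ℝ × ℝ) :
    |dot2 (fderiv ℝ f p u) b| ≤ √(jacsq f p) * √(nsq u) * √(nsq b) := by
  refine (abs_dot2_le _ _).trans (mul_le_mul_of_nonneg_right ?_ (Real.sqrt_nonneg _))
  rw [← Real.sqrt_mul (jacsq_nonneg f p)]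
  exact Real.sqrt_le_sqrt (nsq_fderiv_apply_le f p u)

section L2

variable {α : Type*} [MeasurableSpace α] {μ : Measure α}

theorem integral_mul_le_sqrt_mul_sqrt {f g : α → ℝ} (hf : MemLp f 2 μ) (hg : MemLp g 2 μ) :
    ∫ x, f x * g x ∂μ ≤ √(∫ x, f x ^ 2 ∂μ) * √(∫ x, g x ^ 2 ∂μ) := by
  have habs : ∫ x, f x * g x ∂μ ≤ ∫ x, |f x| * |g x| ∂μ :=
    integral_mono (hf.integrable_mul hg) (hf.abs.integrable_mul hg.abs) fun x => by
      rw [← abs_mul]; exact le_abs_self _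
  have hp : ENNReal.ofReal 2 = 2 := by simp
  have hHolder := integral_mul_le_Lp_mul_Lq_of_nonneg Real.HolderConjugate.two_two
    (Eventually.of_forall fun x => abs_nonneg (f x))
    (Eventually.of_forall fun x => abs_nonneg (g x)) (hp ▸ hf.abs) (hp ▸ hg.abs)
  simp only [Real.rpow_two, sq_abs, ← Real.sqrt_eq_rpow] at hHolder
  exact habs.trans hHolder

theorem MeasureTheory.MemLp.div_restrict {p : ENNReal} {s : Set α} {f g : α → ℝ} {c : ℝ}
    (hf : MemLp f p μ) (hg : Measurable g) (hc : 0 < c) (hgs : ∀ x ∈ s, c ≤ g x)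
    (hs : MeasurableSet s) :
    MemLp (fun x => f x / g x) p (μ.restrict s) := by
  refine ((hf.const_mul c⁻¹).restrict s).of_le
    (hf.1.aemeasurable.div hg.aemeasurable).aestronglyMeasurable.restrict ?_
  refine (ae_restrict_iff' hs).mpr (Eventually.of_forall fun x hx => ?_)
  have hgx : 0 < g x := hc.trans_le (hgs x hx)
  rw [norm_div, norm_mul, norm_inv, Real.norm_of_nonneg hgx.le, Real.norm_of_nonneg hc.le,
    ← div_eq_inv_mul]
  exact div_le_div_of_nonneg_left (norm_nonneg _) hc (hgs x hx)

end L2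

section Hardy

variable {f : ℝ → ℝ} {a : ℝ}

theorem memLp_Ioi_div_id (ha : 0 < a) (hf : Continuous f) (hfc : HasCompactSupport f) :
    MemLp (fun t => f t / t) 2 (volume.restrict (Ioi a)) :=
  (hf.memLp_of_hasCompactSupport hfc).div_restrict measurable_id ha (fun _ ht => le_of_lt ht)
    measurableSet_Ioi

theorem integral_div_sq_eq_integral_div_mul_deriv (ha : 0 < a) (hf : ContDiff ℝ 1 f)
    (hfc : HasCompactSupport f) (hfa : f a = 0) :
    ∫ t in Ioi a, (f t / t) ^ 2 = ∫ t in Ioi a, f t / t * (2 * deriv f t) := by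
  have hq := memLp_Ioi_div_id ha hf.continuous hfc
  have hd : MemLp (fun t => 2 * deriv f t) 2 (volume.restrict (Ioi a)) :=
    (((hf.continuous_deriv le_rfl).memLp_of_hasCompactSupport hfc.deriv).restrict _).const_mul 2
  have hderiv : ∀ t ∈ Ici a, HasDerivAt (fun t => f t ^ 2 / t)
      (f t / t * (2 * deriv f t) - (f t / t) ^ 2) t := by
    intro t ht
    have ht0 : t ≠ 0 := (ha.trans_le ht).ne'
    refine (((hf.differentiable one_ne_zero t).hasDerivAt.fun_pow 2).fun_div
      (hasDerivAt_id' t) ht0).congr_deriv ?_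
    field_simp
    ring
  have hlim : Tendsto (fun t => f t ^ 2 / t) atTop (𝓝 0) := by
    refine tendsto_const_nhds.congr' ?_
    filter_upwards [atTop_le_cocompact hfc.isCompact.compl_mem_cocompact] with t ht
    rw [image_eq_zero_of_notMem_tsupport ht]
    simp
  have hprod : Integrable (fun t => f t / t * (2 * deriv f t)) (volume.restrict (Ioi a)) :=
    hq.integrable_mul hd
  have hFTC := integral_Ioi_of_hasDerivAt_of_tendsto' hderiv (hprod.sub hq.integrable_sq) hlim
  rw [integral_sub hprod hq.integrable_sq, hfa, zero_pow two_ne_zero, zero_div, sub_zero] at hFTC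
  linarith

theorem integral_sq_div_sq_le_four_mul_integral_deriv_sq (ha : 0 < a) (hf : ContDiff ℝ 1 f)
    (hfc : HasCompactSupport f) (hfa : f a = 0) :
    ∫ t in Ioi a, f t ^ 2 / t ^ 2 ≤ 4 * ∫ t in Ioi a, deriv f t ^ 2 := by
  have hq := memLp_Ioi_div_id ha hf.continuous hfc
  have hd : MemLp (fun t => 2 * deriv f t) 2 (volume.restrict (Ioi a)) :=
    (((hf.continuous_deriv le_rfl).memLp_of_hasCompactSupport hfc.deriv).restrict _).const_mul 2
  simp_rw [← div_pow]
  set I := ∫ t in Ioi a, (f t / t) ^ 2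
  set J := ∫ t in Ioi a, deriv f t ^ 2
  have hI : 0 ≤ I := setIntegral_nonneg measurableSet_Ioi fun t _ => sq_nonneg _
  have hJ : 0 ≤ J := setIntegral_nonneg measurableSet_Ioi fun t _ => sq_nonneg _
  have hCS : I ≤ √I * (2 * √J) := by
    calc I = ∫ t in Ioi a, f t / t * (2 * deriv f t) :=
          integral_div_sq_eq_integral_div_mul_deriv ha hf hfc hfa
      _ ≤ √I * √(∫ t in Ioi a, (2 * deriv f t) ^ 2) := integral_mul_le_sqrt_mul_sqrt hq hd
      _ = √I * (2 * √J) := by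
          simp_rw [mul_pow, integral_const_mul]
          rw [Real.sqrt_mul' _ hJ, Real.sqrt_sq zero_le_two]
  -- `I ≤ 2 √I √J` forces `√I ≤ 2 √J`
  nlinarith [Real.sq_sqrt hI, Real.sq_sqrt hJ, Real.sqrt_nonneg I, Real.sqrt_nonneg J,
    sq_nonneg (√I - 2 * √J)]

end Hardy

theorem omegaPlus_eq_prod : OmegaPlus = univ ×ˢ Ioi 1 := by
  ext p; simp [OmegaPlus]

theorem measurableSet_omegaPlus : MeasurableSet OmegaPlus :=
  measurableSet_lt measurable_const measurable_snd

theorem volume_restrict_omegaPlus :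
    volume.restrict OmegaPlus = volume.prod (volume.restrict (Ioi (1 : ℝ))) := by
  rw [omegaPlus_eq_prod, Measure.volume_eq_prod, ← Measure.prod_restrict, Measure.restrict_univ]

theorem memLp_omegaPlus_div_snd {f : ℝ × ℝ → ℝ} (hf : Continuous f) (hfc : HasCompactSupport f) :
    MemLp (fun p => f p / p.2) 2 (volume.restrict OmegaPlus) :=
  (hf.memLp_of_hasCompactSupport hfc).div_restrict measurable_snd one_pos
    (fun _ hp => le_of_lt hp) measurableSet_omegaPlus

theorem integrableOn_omegaPlus_sq_div_sq {f : ℝ × ℝ → ℝ} (hf : Continuous f)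
    (hfc : HasCompactSupport f) : IntegrableOn (fun p => f p ^ 2 / p.2 ^ 2) OmegaPlus := by
  have h := (memLp_omegaPlus_div_snd hf hfc).integrable_sq
  simp only [div_pow] at h
  exact h

theorem integral_omegaPlus_sq_div_sq_le {f : ℝ × ℝ → ℝ} (hf : ContDiff ℝ 1 f)
    (hfc : HasCompactSupport f) (hfs : tsupport f ⊆ OmegaPlus) :
    ∫ p in OmegaPlus, f p ^ 2 / p.2 ^ 2 ≤ 4 * ∫ p in OmegaPlus, fderiv ℝ f p (0, 1) ^ 2 := by
  have hI₁ := integrableOn_omegaPlus_sq_div_sq hf.continuous hfc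
  have hI₂ : IntegrableOn (fun p => fderiv ℝ f p (0, 1) ^ 2) OmegaPlus :=
    (((hf.continuous_fderiv one_ne_zero).clm_apply continuous_const).memLp_of_hasCompactSupport
      (p := 2) (hfc.fderiv_apply ℝ (0, 1))).integrable_sq.integrableOn
  rw [IntegrableOn, volume_restrict_omegaPlus] at hI₁ hI₂
  rw [volume_restrict_omegaPlus, integral_prod _ hI₁, integral_prod _ hI₂, ← integral_const_mul]
  refine integral_mono hI₁.integral_prod_left (hI₂.integral_prod_left.const_mul 4) fun x => ?_
  have hslice : ContDiff ℝ 1 (fun y => f (x, y)) := hf.comp (contDiff_prodMk_right x)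
  have hslice_supp : HasCompactSupport (fun y => f (x, y)) :=
    HasCompactSupport.intro (hfc.isCompact.image continuous_snd) fun y hy =>
      image_eq_zero_of_notMem_tsupport fun h => hy ⟨_, h, rfl⟩
  have hslice_one : f (x, 1) = 0 :=
    image_eq_zero_of_notMem_tsupport fun h => lt_irrefl (1 : ℝ) (hfs h)
  have hslice_deriv (y : ℝ) : deriv (fun y => f (x, y)) y = fderiv ℝ f (x, y) (0, 1) :=
    ((hf.differentiable one_ne_zero (x, y)).hasFDerivAt.comp_hasDerivAt y
      ((hasDerivAt_const y x).prodMk (hasDerivAt_id y))).deriv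
  simpa only [hslice_deriv] using
    integral_sq_div_sq_le_four_mul_integral_deriv_sq one_pos hslice hslice_supp hslice_one

theorem integrable_nsq_comp {g : ℝ × ℝ → ℝ × ℝ} (hg : Continuous g) (hgc : HasCompactSupport g) :
    Integrable (fun p => nsq (g p)) :=
  (continuous_nsq.comp hg).integrable_of_hasCompactSupport (hgc.comp_left (by simp [nsq]))

theorem integrable_jacsq {v : ℝ × ℝ → ℝ × ℝ} (hv : ContDiff ℝ 1 v) (hvc : HasCompactSupport v) :
    Integrable (jacsq v) :=
  have hDv := hv.continuous_fderiv one_ne_zero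
  (integrable_nsq_comp (hDv.clm_apply continuous_const) (hvc.fderiv_apply ℝ _)).add
    (integrable_nsq_comp (hDv.clm_apply continuous_const) (hvc.fderiv_apply ℝ _))

theorem integral_omegaPlus_nsq_div_sq_le {v : ℝ × ℝ → ℝ × ℝ} (hv : ContDiff ℝ 1 v)
    (hvc : HasCompactSupport v) (hvs : tsupport v ⊆ OmegaPlus) :
    ∫ p in OmegaPlus, nsq (v p) / p.2 ^ 2 ≤ 4 * ∫ p in OmegaPlus, jacsq v p := by
  have hDv : Continuous fun p => fderiv ℝ v p (0, 1) :=
    (hv.continuous_fderiv one_ne_zero).clm_apply continuous_const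
  have hDvc : HasCompactSupport fun p => fderiv ℝ v p (0, 1) := hvc.fderiv_apply ℝ _
  have hD₁ : IntegrableOn (fun p => (fderiv ℝ v p (0, 1)).1 ^ 2) OmegaPlus :=
    (hDv.fst.memLp_of_hasCompactSupport (p := 2) (hDvc.comp_left rfl)).integrable_sq.integrableOn
  have hD₂ : IntegrableOn (fun p => (fderiv ℝ v p (0, 1)).2 ^ 2) OmegaPlus :=
    (hDv.snd.memLp_of_hasCompactSupport (p := 2) (hDvc.comp_left rfl)).integrable_sq.integrableOn
  have hH₁ := integral_omegaPlus_sq_div_sq_le (contDiff_fst.comp hv) (hvc.comp_left rfl)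
    ((tsupport_comp_subset rfl v).trans hvs)
  have hH₂ := integral_omegaPlus_sq_div_sq_le (contDiff_snd.comp hv) (hvc.comp_left rfl)
    ((tsupport_comp_subset rfl v).trans hvs)
  simp only [Function.comp_def, fderiv.fst (hv.differentiable one_ne_zero _),
    fderiv.snd (hv.differentiable one_ne_zero _), ContinuousLinearMap.comp_apply,
    ContinuousLinearMap.coe_fst', ContinuousLinearMap.coe_snd'] at hH₁ hH₂
  have hsplit : ∫ p in OmegaPlus, nsq (v p) / p.2 ^ 2 =
      (∫ p in OmegaPlus, (v p).1 ^ 2 / p.2 ^ 2) + ∫ p in OmegaPlus, (v p).2 ^ 2 / p.2 ^ 2 := by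
    rw [← integral_add (integrableOn_omegaPlus_sq_div_sq hv.continuous.fst (hvc.comp_left rfl))
      (integrableOn_omegaPlus_sq_div_sq hv.continuous.snd (hvc.comp_left rfl))]
    simp only [nsq, add_div]
  have hjac : (∫ p in OmegaPlus, (fderiv ℝ v p (0, 1)).1 ^ 2) +
      ∫ p in OmegaPlus, (fderiv ℝ v p (0, 1)).2 ^ 2 ≤ ∫ p in OmegaPlus, jacsq v p := by
    rw [← integral_add hD₁ hD₂]
    refine integral_mono (hD₁.add hD₂) (integrable_jacsq hv hvc).integrableOn fun p => ?_
    exact le_add_of_nonneg_left (nsq_nonneg _)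
  linarith

theorem abs_dot2_fderiv_add_le {f : ℝ × ℝ → ℝ × ℝ} {p a b : ℝ × ℝ} {N : ℝ} (hp : 0 < p.2)
    (hN : p.2 ^ 2 * √(jacsq f p) ≤ N) :
    |dot2 (fderiv ℝ f p (a + (1, 0))) b| ≤
      p.2 * √(jacsq f p) * (√(nsq b) / p.2) + N * (√(nsq a) / p.2 * (√(nsq b) / p.2)) := by
  have he₁ : √(nsq (a + (1, 0))) ≤ √(nsq a) + 1 :=
    (sqrt_nsq_add_le a (1, 0)).trans_eq (by simp [nsq])
  calc |dot2 (fderiv ℝ f p (a + (1, 0))) b|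
      ≤ √(jacsq f p) * √(nsq (a + (1, 0))) * √(nsq b) := abs_dot2_fderiv_apply_le f p _ b
    _ ≤ √(jacsq f p) * (√(nsq a) + 1) * √(nsq b) := by gcongr
    _ = p.2 * √(jacsq f p) * (√(nsq b) / p.2) +
          p.2 ^ 2 * √(jacsq f p) * (√(nsq a) / p.2 * (√(nsq b) / p.2)) := by
        field_simp; ring
    _ ≤ _ := by gcongr

theorem memLp_omegaPlus_sqrt_nsq_div_snd {v : ℝ × ℝ → ℝ × ℝ} (hv : Continuous v)
    (hvc : HasCompactSupport v) :
    MemLp (fun p => √(nsq (v p)) / p.2) 2 (volume.restrict OmegaPlus) :=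
  memLp_omegaPlus_div_snd (Real.continuous_sqrt.comp (continuous_nsq.comp hv))
    (hvc.comp_left (g := fun a => √(nsq a)) (by simp [nsq]))

theorem abs_integral_omegaPlus_dot2_fderiv_le {v w ubar : ℝ × ℝ → ℝ × ℝ} {N : ℝ}
    (hv : Continuous v) (hw : Continuous w) (hvc : HasCompactSupport v)
    (hwc : HasCompactSupport w) (hubar : IntegrableOn (fun p => p.2 ^ 2 * jacsq ubar p) OmegaPlus)
    (hN : 0 ≤ N) (hubarN : ∀ p ∈ OmegaPlus, p.2 ^ 2 * √(jacsq ubar p) ≤ N) :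
    |∫ p in OmegaPlus, dot2 (fderiv ℝ ubar p (v p + (1, 0))) (w p)| ≤
      √(∫ p in OmegaPlus, p.2 ^ 2 * jacsq ubar p) * √(∫ p in OmegaPlus, nsq (w p) / p.2 ^ 2) +
        N * (√(∫ p in OmegaPlus, nsq (v p) / p.2 ^ 2) *
          √(∫ p in OmegaPlus, nsq (w p) / p.2 ^ 2)) := by
  have hsq (p : ℝ × ℝ) : (p.2 * √(jacsq ubar p)) ^ 2 = p.2 ^ 2 * jacsq ubar p := by
    rw [mul_pow, Real.sq_sqrt (jacsq_nonneg ubar p)]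
  have hsq' (a : ℝ × ℝ) (y : ℝ) : (√(nsq a) / y) ^ 2 = nsq a / y ^ 2 := by
    rw [div_pow, Real.sq_sqrt (nsq_nonneg a)]
  have hUm : Measurable fun p : ℝ × ℝ => p.2 * √(jacsq ubar p) :=
    measurable_snd.mul (measurable_jacsq ubar).sqrt
  have hU : MemLp (fun p => p.2 * √(jacsq ubar p)) 2 (volume.restrict OmegaPlus) :=
    (memLp_two_iff_integrable_sq hUm.aestronglyMeasurable).mpr (by simp only [hsq]; exact hubar)
  have hV := memLp_omegaPlus_sqrt_nsq_div_snd hv hvc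
  have hW := memLp_omegaPlus_sqrt_nsq_div_snd hw hwc
  have hUW : IntegrableOn (fun p => p.2 * √(jacsq ubar p) * (√(nsq (w p)) / p.2)) OmegaPlus :=
    hU.integrable_mul hW
  have hVW : IntegrableOn (fun p => √(nsq (v p)) / p.2 * (√(nsq (w p)) / p.2)) OmegaPlus :=
    hV.integrable_mul hW
  have hsum : IntegrableOn (fun p => p.2 * √(jacsq ubar p) * (√(nsq (w p)) / p.2) +
      N * (√(nsq (v p)) / p.2 * (√(nsq (w p)) / p.2))) OmegaPlus :=
    hUW.add (hVW.const_mul N)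
  calc |∫ p in OmegaPlus, dot2 (fderiv ℝ ubar p (v p + (1, 0))) (w p)|
      ≤ ∫ p in OmegaPlus, (p.2 * √(jacsq ubar p) * (√(nsq (w p)) / p.2) +
          N * (√(nsq (v p)) / p.2 * (√(nsq (w p)) / p.2))) := by
        rw [← Real.norm_eq_abs]
        refine norm_integral_le_of_norm_le hsum ((ae_restrict_iff' measurableSet_omegaPlus).mpr
          (Eventually.of_forall fun p hp => ?_))
        exact abs_dot2_fderiv_add_le (one_pos.trans hp) (hubarN p hp)
    _ = (∫ p in OmegaPlus, p.2 * √(jacsq ubar p) * (√(nsq (w p)) / p.2)) +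
          N * ∫ p in OmegaPlus, √(nsq (v p)) / p.2 * (√(nsq (w p)) / p.2) := by
        rw [integral_add hUW (hVW.const_mul N), integral_const_mul]
    _ ≤ _ := by
        gcongr
        · simpa only [hsq, hsq'] using integral_mul_le_sqrt_mul_sqrt hU hW
        · simpa only [hsq'] using integral_mul_le_sqrt_mul_sqrt hV hW

/-- There is a constant `C` such that for all `C¹` vector fields `v, w` compactly supported
in `Ω₊` and every `C¹` vector field `ū` on `Ω₊` with
`N₂ = (∫_{Ω₊} y²|∇ū|²)^{1/2} < ∞` and `sup_{Ω₊} y²·|∇ū| ≤ N_∞ < ∞`, one has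
`|∫_{Ω₊} [((v+e₁)·∇)ū]·w| ≤ C (1 + ‖∇v‖_{L²(Ω₊)}) (∫_{Ω₊} |w|²/y²)^{1/2} (N₂ + N_∞)`. -/
theorem trilinear_continuity_weighted_two :
    ∃ C : ℝ, ∀ (v w ubar : ℝ × ℝ → ℝ × ℝ) (N2 Ninf : ℝ),
      ContDiff ℝ 1 v → ContDiff ℝ 1 w →
      HasCompactSupport v → HasCompactSupport w →
      tsupport v ⊆ OmegaPlus → tsupport w ⊆ OmegaPlus →
      ContDiffOn ℝ 1 ubar OmegaPlus →
      IntegrableOn (fun p => p.2 ^ 2 * jacsq ubar p) OmegaPlus →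
      (∫ p in OmegaPlus, p.2 ^ 2 * jacsq ubar p) ^ ((1 : ℝ)/2) = N2 →
      (∀ p ∈ OmegaPlus, p.2 ^ 2 * Real.sqrt (jacsq ubar p) ≤ Ninf) →
      |∫ p in OmegaPlus, dot2 (fderiv ℝ ubar p (v p + (1, 0))) (w p)| ≤
        C * (1 + (∫ p in OmegaPlus, jacsq v p) ^ ((1 : ℝ)/2)) *
          (∫ p in OmegaPlus, nsq (w p) / p.2 ^ 2) ^ ((1 : ℝ)/2) * (N2 + Ninf) := by
  refine ⟨2, fun v w ubar N2 Ninf hv hw hvc hwc hvs _ _ hubar hN2 hNinf => ?_⟩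
  simp only [← Real.sqrt_eq_rpow] at hN2 ⊢
  have hNinf0 : 0 ≤ Ninf :=
    (mul_nonneg (sq_nonneg _) (Real.sqrt_nonneg _)).trans (hNinf (0, 2) (by norm_num [OmegaPlus]))
  have hHardy : √(∫ p in OmegaPlus, nsq (v p) / p.2 ^ 2) ≤ 2 * √(∫ p in OmegaPlus, jacsq v p) := by
    calc √(∫ p in OmegaPlus, nsq (v p) / p.2 ^ 2)
        ≤ √(4 * ∫ p in OmegaPlus, jacsq v p) :=
          Real.sqrt_le_sqrt (integral_omegaPlus_nsq_div_sq_le hv hvc hvs)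
      _ = 2 * √(∫ p in OmegaPlus, jacsq v p) := by
          rw [Real.sqrt_mul' _ (setIntegral_nonneg measurableSet_omegaPlus fun p _ =>
            jacsq_nonneg v p), show (4 : ℝ) = 2 ^ 2 by norm_num, Real.sqrt_sq zero_le_two]
  have hN2_nonneg : 0 ≤ N2 := hN2 ▸ Real.sqrt_nonneg _
  have hX := Real.sqrt_nonneg (∫ p in OmegaPlus, jacsq v p)
  have hW := Real.sqrt_nonneg (∫ p in OmegaPlus, nsq (w p) / p.2 ^ 2)
  have hest := abs_integral_omegaPlus_dot2_fderiv_le hv.continuous hw.continuous hvc hwc hubar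
    hNinf0 hNinf
  rw [hN2] at hest
  nlinarith [mul_le_mul_of_nonneg_left (mul_le_mul_of_nonneg_right hHardy hW) hNinf0,
    mul_nonneg (mul_nonneg hX hW) hN2_nonneg, mul_nonneg hNinf0 hW]
end
end

section
/- Let α > 1 and M ≥ 0. There exists a constant C, depending only on α, such that the following holds. Let û : ℝ × [1,∞) → ℂ be measurable with |û(k,z)| ≤ M·(z^{-1/2}/(1 + (|k|z)^α) + 1/(1 + (|k|z²)^α)) for all k and all z ≥ 1, and define u(x,z) = ∫_ℝ e^{ikx} û(k,z) dk (the integrand being integrable in k for each z). Then for every x ∈ ℝ and every y ≥ 1, the function ψ(x,y) = −∫₁^y u(x,z) dz is well defined and satisfies |ψ(x,y)| ≤ C·M. -/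
open MeasureTheory intervalIntegral

noncomputable section

/-!
Since `|e^{ikx}| = 1`, integrating the bound on `û` in `k` and rescaling `k ↦ k z`, `k ↦ k z²`
gives `‖u(x,z)‖ ≤ M I (z^{-3/2} + z^{-2}) ≤ 2 M I z^{-3/2}`, where `I = ∫ (1 + |k|^α)⁻¹ dk` is
finite because `α > 1`. As `∫₁^∞ z^{-3/2} dz = 2`, the constant `C = 4 I` works.
-/

lemma Real.one_add_rpow_le {p a : ℝ} (hp : 1 ≤ p) (ha : 0 ≤ a) :
    (1 + a) ^ p ≤ 2 ^ (p - 1) * (1 + a ^ p) := by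
  lift a to NNReal using ha
  have := NNReal.rpow_add_le_mul_rpow_add_rpow 1 a hp
  rw [NNReal.one_rpow] at this
  exact_mod_cast this

lemma integrable_one_div_one_add_abs_rpow {α : ℝ} (hα : 1 < α) :
    Integrable fun k : ℝ => 1 / (1 + |k| ^ α) := by
  refine ((integrable_one_add_norm (E := ℝ) (by simpa using hα)).const_mul (2 ^ (α - 1))).mono'
    (Measurable.aestronglyMeasurable (by fun_prop)) (.of_forall fun k => ?_)
  rw [Real.norm_of_nonneg (by positivity), Real.norm_eq_abs, Real.rpow_neg (by positivity),
    ← div_eq_mul_inv, div_le_div_iff₀ (by positivity) (by positivity), one_mul]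
  exact Real.one_add_rpow_le hα.le (abs_nonneg k)

lemma integrable_one_div_one_add_abs_mul_rpow {α c : ℝ} (hα : 1 < α) (hc : 0 < c) :
    Integrable fun k : ℝ => 1 / (1 + (|k| * c) ^ α) := by
  have := (integrable_one_div_one_add_abs_rpow hα).comp_mul_left' hc.ne'
  simpa [abs_mul, abs_of_pos hc, mul_comm] using this

lemma integral_one_div_one_add_abs_mul_rpow {α c : ℝ} (hc : 0 < c) :
    ∫ k : ℝ, 1 / (1 + (|k| * c) ^ α) = c⁻¹ * ∫ k : ℝ, 1 / (1 + |k| ^ α) := by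
  have := Measure.integral_comp_mul_left (fun k : ℝ => 1 / (1 + |k| ^ α)) c
  simpa [abs_mul, abs_of_pos hc, mul_comm] using this

lemma norm_cexp_I_mul_mul (k x : ℝ) : ‖Complex.exp (Complex.I * k * x)‖ = 1 := by
  simpa [mul_comm, mul_left_comm] using Complex.norm_exp_ofReal_mul_I (k * x)

lemma integral_rpow_le_of_lt_neg_one {s y : ℝ} (hs : s < -1) (hy : 1 ≤ y) :
    ∫ z in (1 : ℝ)..y, z ^ s ≤ -(s + 1)⁻¹ := by
  have hs1 : s + 1 < 0 := by linarith
  rw [integral_rpow (Or.inr ⟨hs.ne, Set.notMem_uIcc_of_lt one_pos (by linarith)⟩),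
    Real.one_rpow, div_le_iff_of_neg hs1, neg_mul, inv_mul_cancel₀ hs1.ne]
  linarith [Real.rpow_nonneg (zero_le_one.trans hy) (s + 1)]

lemma norm_integral_cexp_mul_le_of_two_scale_bound {α M z : ℝ} (hα : 1 < α) (hM : 0 ≤ M)
    (hz : 1 ≤ z) (x : ℝ) {f : ℝ → ℂ}
    (hf : ∀ k, ‖f k‖ ≤
      M * (z ^ (-(1 : ℝ) / 2) / (1 + (|k| * z) ^ α) + 1 / (1 + (|k| * z ^ 2) ^ α))) :
    ‖∫ k : ℝ, Complex.exp (Complex.I * k * x) * f k‖ ≤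
      2 * (M * ∫ k : ℝ, 1 / (1 + |k| ^ α)) * z ^ (-(3 : ℝ) / 2) := by
  set I := ∫ k : ℝ, 1 / (1 + |k| ^ α)
  have hz0 : 0 < z := zero_lt_one.trans_le hz
  simp_rw [div_eq_mul_one_div (z ^ (-(1 : ℝ) / 2))] at hf
  have hint₁ := integrable_one_div_one_add_abs_mul_rpow hα hz0
  have hint₂ := integrable_one_div_one_add_abs_mul_rpow hα (pow_pos hz0 2)
  have hB : Integrable fun k : ℝ =>
      M * (z ^ (-(1 : ℝ) / 2) * (1 / (1 + (|k| * z) ^ α)) + 1 / (1 + (|k| * z ^ 2) ^ α)) :=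
    ((hint₁.const_mul _).add hint₂).const_mul M
  have hI : 0 ≤ I := integral_nonneg fun k => by positivity
  have hpow₁ : z ^ (-(1 : ℝ) / 2) * z⁻¹ = z ^ (-(3 : ℝ) / 2) := by
    rw [← Real.rpow_neg_one z, ← Real.rpow_add hz0]; norm_num
  have hpow₂ : (z ^ 2)⁻¹ ≤ z ^ (-(3 : ℝ) / 2) := by
    rw [← Real.rpow_natCast, ← Real.rpow_neg hz0.le]
    exact Real.rpow_le_rpow_of_exponent_le hz (by norm_num)
  calc ‖∫ k : ℝ, Complex.exp (Complex.I * k * x) * f k‖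
      ≤ ∫ k : ℝ, M * (z ^ (-(1 : ℝ) / 2) * (1 / (1 + (|k| * z) ^ α))
          + 1 / (1 + (|k| * z ^ 2) ^ α)) :=
        norm_integral_le_of_norm_le hB (.of_forall fun k => by
          rw [norm_mul, norm_cexp_I_mul_mul, one_mul]; exact hf k)
    _ = M * (z ^ (-(1 : ℝ) / 2) * z⁻¹ * I + (z ^ 2)⁻¹ * I) := by
        rw [MeasureTheory.integral_const_mul, integral_add (hint₁.const_mul _) hint₂,
          MeasureTheory.integral_const_mul, integral_one_div_one_add_abs_mul_rpow hz0,
          integral_one_div_one_add_abs_mul_rpow (pow_pos hz0 2), mul_assoc]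
    _ ≤ 2 * (M * I) * z ^ (-(3 : ℝ) / 2) := by
        rw [hpow₁]
        nlinarith [mul_le_mul_of_nonneg_right hpow₂ (mul_nonneg hM hI)]

lemma intervalIntegrable_rpow_of_one_le {s y : ℝ} (hy : 1 ≤ y) :
    IntervalIntegrable (fun z : ℝ => z ^ s) volume 1 y :=
  intervalIntegral.intervalIntegrable_rpow (Or.inr (Set.notMem_uIcc_of_lt one_pos (by linarith)))

lemma intervalIntegrable_of_norm_le_rpow {E : Type*} [NormedAddCommGroup E] {F : ℝ → E}
    {A s y : ℝ} (hy : 1 ≤ y) (hF : AEStronglyMeasurable F (volume.restrict (Set.uIoc 1 y)))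
    (hbound : ∀ z, 1 ≤ z → ‖F z‖ ≤ A * z ^ s) :
    IntervalIntegrable F volume 1 y := by
  refine IntervalIntegrable.mono_fun' (g := fun z => A * z ^ s) ?_ hF ?_
  · exact (intervalIntegrable_rpow_of_one_le hy).const_mul A
  · refine (ae_restrict_iff' measurableSet_uIoc).mpr (.of_forall fun z hz => hbound z ?_)
    rw [Set.uIoc_of_le hy] at hz
    exact hz.1.le

lemma norm_integral_le_of_norm_le_rpow {E : Type*} [NormedAddCommGroup E] [NormedSpace ℝ E]
    {F : ℝ → E} {A s y : ℝ} (hy : 1 ≤ y) (hs : s < -1) (hA : 0 ≤ A)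
    (hbound : ∀ z, 1 ≤ z → ‖F z‖ ≤ A * z ^ s) :
    ‖∫ z in (1 : ℝ)..y, F z‖ ≤ A * -(s + 1)⁻¹ :=
  calc ‖∫ z in (1 : ℝ)..y, F z‖ ≤ ∫ z in (1 : ℝ)..y, A * z ^ s :=
        norm_integral_le_of_norm_le hy (.of_forall fun z hz => hbound z hz.1.le)
          ((intervalIntegrable_rpow_of_one_le hy).const_mul A)
    _ = A * ∫ z in (1 : ℝ)..y, z ^ s := intervalIntegral.integral_const_mul A _
    _ ≤ A * -(s + 1)⁻¹ := mul_le_mul_of_nonneg_left (integral_rpow_le_of_lt_neg_one hs hy) hA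

/-- Let `α > 1`.  There is a constant `C` depending only on `α` such that: whenever
`û : ℝ × [1,∞) → ℂ` is measurable with
`|û(k,z)| ≤ M (z^{-1/2}/(1+(|k|z)^α) + 1/(1+(|k|z²)^α))` for all `k` and all `z ≥ 1`, and
`u(x,z) = ∫ e^{ikx} û(k,z) dk`, then for every `x` and every `y ≥ 1` the stream-function
value `ψ(x,y) = −∫₁^y u(x,z) dz` is well defined (the integrand is interval integrable)
and `|ψ(x,y)| ≤ C M`. -/
theorem stream_function_bounded (α : ℝ) (hα : 1 < α) :
    ∃ C : ℝ, ∀ (M : ℝ) (uhat : ℝ → ℝ → ℂ),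
      0 ≤ M →
      Measurable (fun z : ℝ × ℝ => uhat z.1 z.2) →
      (∀ (k z : ℝ), 1 ≤ z → ‖uhat k z‖ ≤
        M * (z ^ (-(1 : ℝ)/2) / (1 + (|k| * z) ^ α) + 1 / (1 + (|k| * z ^ 2) ^ α))) →
      ∀ (x y : ℝ), 1 ≤ y →
        IntervalIntegrable
          (fun z : ℝ => ∫ k : ℝ, Complex.exp (Complex.I * k * x) * uhat k z) volume 1 y ∧
        ‖-∫ z in (1 : ℝ)..y, ∫ k : ℝ, Complex.exp (Complex.I * k * x) * uhat k z‖ ≤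
          C * M := by
  set I := ∫ k : ℝ, 1 / (1 + |k| ^ α)
  refine ⟨4 * I, fun M uhat hM hmeas hbound x y hy => ?_⟩
  have hslice (z : ℝ) (hz : 1 ≤ z) :
      ‖∫ k : ℝ, Complex.exp (Complex.I * k * x) * uhat k z‖ ≤
        2 * (M * I) * z ^ (-(3 : ℝ) / 2) :=
    norm_integral_cexp_mul_le_of_two_scale_bound hα hM hz x (hbound · z hz)
  have hmeas_u : StronglyMeasurable fun z : ℝ =>
      ∫ k : ℝ, Complex.exp (Complex.I * k * x) * uhat k z :=
    ((by fun_prop : Measurable fun p : ℝ × ℝ => Complex.exp (Complex.I * p.2 * x)).mul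
      (hmeas.comp measurable_swap)).stronglyMeasurable.integral_prod_right'
  have hI : 0 ≤ I := integral_nonneg fun k => by positivity
  refine ⟨intervalIntegrable_of_norm_le_rpow hy hmeas_u.aestronglyMeasurable hslice, ?_⟩
  calc ‖-∫ z in (1 : ℝ)..y, ∫ k : ℝ, Complex.exp (Complex.I * k * x) * uhat k z‖
      ≤ 2 * (M * I) * -(-(3 : ℝ) / 2 + 1)⁻¹ := by
        rw [norm_neg]
        exact norm_integral_le_of_norm_le_rpow hy (by norm_num) (by positivity) hslice
    _ = 4 * I * M := by ring
end
end
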